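/- arXiv:1801.02267 — 8 statements merged into one kernel-verified Lean document; each statement's English description precedes it below -/
import Mathlib

section
/- Let L be a linear functional on complex polynomials, (P_n)_{n≥0} a monic orthogonal polynomial sequence for L (deg P_n = n, L[P_n P_m] = h_n δ_{n,m} with h_n ≠ 0), and suppose L satisfies the Pearson equation L[λ(x)π(x)] = L[φ(x)π(x−1)] for every polynomial π, where λ has degree p and φ has degree q+1. Then for every n there exist scalars A_k(n), for max(−n, −q−1) ≤ k ≤ p, such that λ(x)·P_n(x+1) = Σ_{k=max(−n,−q−1)}^{p} A_k(n) P_{n+k}(x); equivalently, in the expansion of λ(x)P_n(x+1) in the basis (P_m), the coefficient of P_{n+k} vanishes whenever k < −q−1. -/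
open Polynomial

lemma expand_aux (P : ℕ → Polynomial ℂ) (hmonic : ∀ n, (P n).Monic)
    (hdeg : ∀ n, (P n).natDegree = n) :
    ∀ (N : ℕ) (f : Polynomial ℂ), f.natDegree ≤ N →
      ∃ c : ℕ → ℂ, f = ∑ m ∈ Finset.range (N + 1), c m • P m := by
  intro N
  induction N with
  | zero =>
    intro f hf
    refine ⟨fun _ => f.coeff 0, ?_⟩
    have h1 : P 0 = 1 := by
      have := (hmonic 0).natDegree_eq_zero.mp (hdeg 0)
      exact this
    rw [Polynomial.eq_C_of_natDegree_le_zero hf]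
    simp [h1, Polynomial.smul_eq_C_mul]
  | succ N ih =>
    intro f hf
    set a := f.coeff (N + 1) with ha
    set g := f - a • P (N + 1) with hg
    have hgd : g.natDegree ≤ N := by
      rw [Polynomial.natDegree_le_iff_coeff_eq_zero]
      intro i hi
      have hcoef : g.coeff i = f.coeff i - a * (P (N + 1)).coeff i := by
        simp [hg, Polynomial.coeff_smul, smul_eq_mul]
      rcases eq_or_lt_of_le (Nat.succ_le_of_lt hi) with h' | h'
      · have hlead : (P (N + 1)).coeff (N + 1) = 1 := by
          have := (hmonic (N + 1)).coeff_natDegree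
          rwa [hdeg (N + 1)] at this
        rw [hcoef, ← h', hlead, ha]
        ring
      · have h1 : f.coeff i = 0 :=
          Polynomial.coeff_eq_zero_of_natDegree_lt (lt_of_le_of_lt hf h')
        have h2 : (P (N + 1)).coeff i = 0 := by
          apply Polynomial.coeff_eq_zero_of_natDegree_lt
          rw [hdeg (N + 1)]; exact h'
        rw [hcoef, h1, h2]; ring
    obtain ⟨c, hc⟩ := ih g hgd
    refine ⟨fun m => if m = N + 1 then a else c m, ?_⟩
    rw [Finset.sum_range_succ]
    have : f = g + a • P (N + 1) := by rw [hg]; ring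
    rw [this, hc]
    simp only [if_pos rfl]
    congr 1
    apply Finset.sum_congr rfl
    intro m hm
    rw [if_neg (by simp at hm; omega)]

lemma orth_low (L : Polynomial ℂ →ₗ[ℂ] ℂ) (P : ℕ → Polynomial ℂ) (h : ℕ → ℂ)
    (hmonic : ∀ n, (P n).Monic) (hdeg : ∀ n, (P n).natDegree = n)
    (horth : ∀ n m, L (P n * P m) = if n = m then h n else 0)
    (n : ℕ) (g : Polynomial ℂ) (hg : g.natDegree < n) : L (P n * g) = 0 := by
  obtain ⟨N, hN⟩ : ∃ N, n = N + 1 := ⟨n - 1, by omega⟩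
  obtain ⟨c, hc⟩ := expand_aux P hmonic hdeg N g (by omega)
  rw [hc, Finset.mul_sum]
  rw [map_sum]
  apply Finset.sum_eq_zero
  intro m hm
  simp only [Finset.mem_range] at hm
  rw [mul_smul_comm, map_smul, horth, if_neg (by omega)]
  simp

/-- Expansion of λ(x)·Pₙ(x+1) in the orthogonal basis: the coefficient of
P_{n+k} vanishes for k < −q−1, i.e. there exist scalars A_k(n),
max(−n, −q−1) ≤ k ≤ p, with λ(x)Pₙ(x+1) = Σ A_k(n) P_{n+k}(x). -/
theorem laguerre_freud_expansion_A
    (L : Polynomial ℂ →ₗ[ℂ] ℂ) (P : ℕ → Polynomial ℂ) (h : ℕ → ℂ)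
    (hmonic : ∀ n, (P n).Monic) (hdeg : ∀ n, (P n).natDegree = n)
    (hh : ∀ n, h n ≠ 0)
    (horth : ∀ n m, L (P n * P m) = if n = m then h n else 0)
    (p q : ℕ) (lam phi : Polynomial ℂ)
    (hlam : lam.degree = (p : ℕ)) (hphi : phi.degree = (q + 1 : ℕ))
    (hPearson : ∀ π : Polynomial ℂ, L (lam * π) = L (phi * π.comp (X - 1))) :
    ∀ n : ℕ, ∃ A : ℤ → ℂ,
      lam * (P n).comp (X + 1) =
        ∑ k ∈ Finset.Icc (max (-(n : ℤ)) (-(q : ℤ) - 1)) (p : ℤ),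
          A k • P ((n : ℤ) + k).toNat := by
  intro n
  have hlamnd : lam.natDegree = p := Polynomial.natDegree_eq_of_degree_eq_some hlam
  have hphind : phi.natDegree = q + 1 := Polynomial.natDegree_eq_of_degree_eq_some hphi
  set f := lam * (P n).comp (X + 1) with hf
  have hfd : f.natDegree ≤ n + p := by
    apply le_trans (Polynomial.natDegree_mul_le)
    have hcomp : ((P n).comp (X + 1)).natDegree ≤ n := by
      apply le_trans (Polynomial.natDegree_comp_le)
      have : (X + 1 : Polynomial ℂ).natDegree ≤ 1 := by
        apply le_trans (Polynomial.natDegree_add_le _ _)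
        simp
      calc (P n).natDegree * (X + 1 : Polynomial ℂ).natDegree
          ≤ (P n).natDegree * 1 := Nat.mul_le_mul_left _ this
        _ = n := by rw [hdeg n]; ring
    omega
  obtain ⟨c, hc⟩ := expand_aux P hmonic hdeg (n + p) f hfd
  -- key vanishing
  have hvan : ∀ m, m + (q + 1) < n → c m = 0 := by
    intro m hm
    have h1 : L (f * P m) = c m * h m := by
      rw [hc, Finset.sum_mul, map_sum]
      rw [Finset.sum_congr rfl (fun j hj => by
        rw [smul_mul_assoc, map_smul, horth j m, smul_eq_mul])]
      rw [Finset.sum_eq_single m (fun j _ hj => by rw [if_neg hj, mul_zero])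
        (fun hm' => absurd (Finset.mem_range.mpr (by omega)) hm'), if_pos rfl]
    have h2 : L (f * P m) = 0 := by
      have hπ : f * P m = lam * ((P n).comp (X + 1) * P m) := by rw [hf]; ring
      rw [hπ, hPearson]
      have hcompeq : (((P n).comp (X + 1) * P m).comp (X - 1)) =
          P n * (P m).comp (X - 1) := by
        rw [Polynomial.mul_comp, Polynomial.comp_assoc]
        congr 2
        simp [Polynomial.add_comp]
      rw [hcompeq]
      have : phi * (P n * (P m).comp (X - 1)) = P n * (phi * (P m).comp (X - 1)) := by ring
      rw [this]
      apply orth_low L P h hmonic hdeg horth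
      calc (phi * (P m).comp (X - 1)).natDegree
          ≤ phi.natDegree + ((P m).comp (X - 1)).natDegree := Polynomial.natDegree_mul_le
        _ ≤ (q + 1) + m := by
            apply Nat.add_le_add (le_of_eq hphind)
            apply le_trans (Polynomial.natDegree_comp_le)
            have : (X - 1 : Polynomial ℂ).natDegree ≤ 1 := by
              apply le_trans (Polynomial.natDegree_sub_le _ _)
              simp
            calc (P m).natDegree * (X - 1 : Polynomial ℂ).natDegree
                ≤ (P m).natDegree * 1 := Nat.mul_le_mul_left _ this
              _ = m := by rw [hdeg m]; ring
        _ < n := by omega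
    have := h1.symm.trans h2
    exact (mul_eq_zero.mp this).resolve_right (hh m)
  refine ⟨fun k => c ((n : ℤ) + k).toNat, ?_⟩
  rw [hc]
  have step1 : ∑ m ∈ Finset.range (n + p + 1), c m • P m
      = ∑ m ∈ Finset.Icc (n - (q + 1)) (n + p), c m • P m := by
    symm
    apply Finset.sum_subset
    · intro x hx
      simp only [Finset.mem_Icc] at hx
      simp only [Finset.mem_range]
      omega
    · intro x hx hnx
      simp only [Finset.mem_range] at hx
      simp only [Finset.mem_Icc] at hnx
      have : x + (q + 1) < n := by omega
      rw [hvan x this, zero_smul]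
  rw [step1]
  refine Finset.sum_nbij' (fun m => (m : ℤ) - n) (fun k => ((n : ℤ) + k).toNat)
    ?_ ?_ ?_ ?_ ?_
  · intro a ha
    simp only [Finset.mem_Icc, max_le_iff] at ha ⊢
    omega
  · intro b hb
    simp only [Finset.mem_Icc, max_le_iff] at hb ⊢
    omega
  · intro a ha
    show ((n : ℤ) + ((a : ℤ) - n)).toNat = a
    omega
  · intro b hb
    simp only [Finset.mem_Icc, max_le_iff] at hb
    show ((((n : ℤ) + b).toNat : ℤ) - n) = b
    omega
  · intro a ha
    have h' : ((n : ℤ) + ((a : ℤ) - n)).toNat = a := by omega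
    simp only [h']
end

section
/- Let L be a linear functional on complex polynomials, (P_n)_{n≥0} a monic orthogonal polynomial sequence for L, and suppose L satisfies the Pearson equation L[λ(x)π(x)] = L[φ(x)π(x−1)] for every polynomial π, where deg λ = p and deg φ = q+1. Then for every n there exist scalars B_k(n), for max(−n, −p) ≤ k ≤ q+1, such that φ(x)·P_n(x−1) = Σ_{k=max(−n,−p)}^{q+1} B_k(n) P_{n+k}(x); equivalently, in the expansion of φ(x)P_n(x−1) in the basis (P_m), the coefficient of P_{n+k} vanishes whenever k < −p. -/
open Polynomial

/-! The monic polynomials `Pₘ` form a basis of `ℂ[X]`, and by orthogonality the coefficient of `Pₘ`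
in `φ(x)Pₙ(x−1)` is `L[φ(x)Pₙ(x−1)Pₘ(x)] / hₘ`. It vanishes for `m > n + q + 1` by degree, and for
`m + p < n` because the Pearson equation turns it into `L[λ(x)Pₘ(x+1)·Pₙ(x)]`, where `Pₙ` is
orthogonal to the polynomial `λ(x)Pₘ(x+1)` of degree at most `p + m < n`. -/

-- The truncated subtraction `n - a` matches the lower bound `max (-n) (-a)`.
theorem Finset.sum_Icc_toNat_add {M : Type*} [AddCommMonoid M] (g : ℕ → M) (n a e : ℕ) :
    ∑ k ∈ Icc (max (-(n : ℤ)) (-(a : ℤ))) (e : ℤ), g ((n : ℤ) + k).toNat =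
      ∑ m ∈ Icc (n - a) (n + e), g m := by
  refine sum_nbij' (fun k => ((n : ℤ) + k).toNat) (fun m => (m : ℤ) - n) ?_ ?_ ?_ ?_
    (fun _ _ => rfl) <;> simp only [mem_Icc] <;> intros <;> omega

namespace Polynomial

variable {R : Type*}

theorem map_mul_comp_X_sub_one_mul [CommRing R] {L : R[X] →ₗ[R] R} {lam phi : R[X]}
    (hPearson : ∀ π : R[X], L (lam * π) = L (phi * π.comp (X - 1))) (f g : R[X]) :
    L (phi * f.comp (X - 1) * g) = L (lam * f * g.comp (X + 1)) := by
  rw [mul_assoc, mul_assoc, hPearson]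
  simp [mul_comp, comp_assoc]

def Sequence.ofMonic [Semiring R] [Nontrivial R] {P : ℕ → R[X]} (hmonic : ∀ n, (P n).Monic)
    (hdeg : ∀ n, (P n).natDegree = n) : Sequence R where
  elems' := P
  degree_eq' n := by rw [degree_eq_natDegree (hmonic n).ne_zero, hdeg]

@[simp]
theorem Sequence.ofMonic_apply [Semiring R] [Nontrivial R] {P : ℕ → R[X]}
    (hmonic : ∀ n, (P n).Monic) (hdeg : ∀ n, (P n).natDegree = n) (n : ℕ) :
    Sequence.ofMonic hmonic hdeg n = P n :=
  rfl

namespace Sequence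

variable [CommRing R] [IsDomain R] (S : Sequence R) (hCoeff : ∀ i, IsUnit (S i).leadingCoeff)

theorem basis_repr_eq_zero_of_natDegree_lt {f : R[X]} {m : ℕ} (hm : f.natDegree < m) :
    (S.basis hCoeff).repr f m = 0 := by
  have hspan : f ∈ Submodule.span R (S.basis hCoeff '' Set.Iic f.natDegree) := by
    rw [show ⇑(S.basis hCoeff) = ⇑S from _root_.funext fun i => S.basis_eq_self hCoeff i,
      S.span_degreeLE fun i _ => hCoeff i]
    exact mem_degreeLE.mpr degree_le_natDegree
  rw [← Finsupp.notMem_support_iff]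
  exact fun hsupp => (Module.Basis.mem_span_image _).mp hspan hsupp |>.not_gt hm

variable (L : R[X] →ₗ[R] R) (horth : ∀ m n, m ≠ n → L (S m * S n) = 0)
include hCoeff horth

theorem map_mul_eq_basis_repr_mul (f : R[X]) (m : ℕ) :
    L (f * S m) = (S.basis hCoeff).repr f m * L (S m * S m) := by
  conv_lhs => rw [← (S.basis hCoeff).linearCombination_repr f]
  rw [Finsupp.linearCombination_apply, Finsupp.sum, Finset.sum_mul, map_sum]
  simp only [basis_eq_self, smul_mul_assoc, map_smul, smul_eq_mul]
  refine Finset.sum_eq_single m (fun i _ hi => by rw [horth i m hi, mul_zero]) fun hm => ?_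
  rw [Finsupp.notMem_support_iff.mp hm, zero_mul]

theorem map_mul_eq_zero_of_natDegree_lt {f : R[X]} {m : ℕ} (hm : f.natDegree < m) :
    L (f * S m) = 0 := by
  rw [S.map_mul_eq_basis_repr_mul hCoeff L horth, S.basis_repr_eq_zero_of_natDegree_lt hCoeff hm,
    zero_mul]

variable {lam phi : R[X]} {p : ℕ} (hlam : lam.natDegree ≤ p)
  (hPearson : ∀ π : R[X], L (lam * π) = L (phi * π.comp (X - 1)))
  (hnorm : ∀ m, L (S m * S m) ≠ 0)
include hlam hPearson hnorm

theorem basis_repr_mul_comp_X_sub_one_eq_zero {n m : ℕ} (hmn : m + p < n) :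
    (S.basis hCoeff).repr (phi * (S n).comp (X - 1)) m = 0 := by
  have hdeg : (lam * (S m).comp (X + 1)).natDegree < n := by
    refine natDegree_mul_le.trans_lt ?_
    rw [natDegree_comp, ← C_1, natDegree_X_add_C, S.natDegree_eq, mul_one]
    omega
  have hcoeff := S.map_mul_eq_basis_repr_mul hCoeff L horth (phi * (S n).comp (X - 1)) m
  rw [map_mul_comp_X_sub_one_mul hPearson, mul_right_comm,
    S.map_mul_eq_zero_of_natDegree_lt hCoeff L horth hdeg, eq_comm, mul_eq_zero] at hcoeff
  exact hcoeff.resolve_right (hnorm m)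

theorem eq_sum_Icc_basis_repr_smul (n : ℕ) :
    phi * (S n).comp (X - 1) = ∑ m ∈ Finset.Icc (n - p) (n + phi.natDegree),
      (S.basis hCoeff).repr (phi * (S n).comp (X - 1)) m • S m := by
  have hsupp : ((S.basis hCoeff).repr (phi * (S n).comp (X - 1))).support ⊆
      Finset.Icc (n - p) (n + phi.natDegree) := by
    intro m hm
    rw [Finsupp.mem_support_iff] at hm
    have hlow : n - p ≤ m := by
      by_contra! hlt
      exact hm (S.basis_repr_mul_comp_X_sub_one_eq_zero hCoeff L horth hlam hPearson hnorm
        (by omega))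
    have hhigh : m ≤ n + phi.natDegree := by
      by_contra! hlt
      refine hm (S.basis_repr_eq_zero_of_natDegree_lt hCoeff (natDegree_mul_le.trans_lt ?_))
      rw [natDegree_comp, ← C_1, natDegree_X_sub_C, S.natDegree_eq, mul_one]
      omega
    exact Finset.mem_Icc.mpr ⟨hlow, hhigh⟩
  conv_lhs => rw [← (S.basis hCoeff).linearCombination_repr (phi * (S n).comp (X - 1))]
  rw [Finsupp.linearCombination_apply, Finsupp.sum_of_support_subset _ hsupp _ (by simp)]
  simp only [basis_eq_self]

end Sequence

end Polynomial

/-- Expansion of φ(x)·Pₙ(x−1) in the orthogonal basis: the coefficient of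
P_{n+k} vanishes for k < −p, i.e. there exist scalars B_k(n),
max(−n, −p) ≤ k ≤ q+1, with φ(x)Pₙ(x−1) = Σ B_k(n) P_{n+k}(x). -/
theorem laguerre_freud_expansion_B
    (L : Polynomial ℂ →ₗ[ℂ] ℂ) (P : ℕ → Polynomial ℂ) (h : ℕ → ℂ)
    (hmonic : ∀ n, (P n).Monic) (hdeg : ∀ n, (P n).natDegree = n)
    (hh : ∀ n, h n ≠ 0)
    (horth : ∀ n m, L (P n * P m) = if n = m then h n else 0)
    (p q : ℕ) (lam phi : Polynomial ℂ)
    (hlam : lam.degree = (p : ℕ)) (hphi : phi.degree = (q + 1 : ℕ))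
    (hPearson : ∀ π : Polynomial ℂ, L (lam * π) = L (phi * π.comp (X - 1))) :
    ∀ n : ℕ, ∃ B : ℤ → ℂ,
      phi * (P n).comp (X - 1) =
        ∑ k ∈ Finset.Icc (max (-(n : ℤ)) (-(p : ℤ))) ((q : ℤ) + 1),
          B k • P ((n : ℤ) + k).toNat := by
  intro n
  let S := Sequence.ofMonic hmonic hdeg
  have hCoeff : ∀ i, IsUnit (S i).leadingCoeff := fun i => (hmonic i).leadingCoeff ▸ isUnit_one
  have horth' : ∀ m k, m ≠ k → L (S m * S k) = 0 := fun m k hmk => by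
    simpa [S, hmk] using horth m k
  have hnorm : ∀ m, L (S m * S m) ≠ 0 := fun m => by simpa [S, horth] using hh m
  have hexp := S.eq_sum_Icc_basis_repr_smul hCoeff L horth'
    (natDegree_le_of_degree_le hlam.le) hPearson hnorm n
  rw [natDegree_eq_of_degree_eq_some hphi] at hexp
  refine ⟨fun k => (S.basis hCoeff).repr (phi * (P n).comp (X - 1)) ((n : ℤ) + k).toNat, ?_⟩
  have hshift := Finset.sum_Icc_toNat_add
    (fun m => (S.basis hCoeff).repr (phi * (P n).comp (X - 1)) m • P m) n p (q + 1)
  push_cast at hshift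
  exact hexp.trans hshift.symm
end

section
/- Let L be a linear functional on complex polynomials, (P_n)_{n≥0} a monic orthogonal polynomial sequence for L satisfying the Pearson equation with polynomials λ (deg λ = p) and φ (deg φ = q+1). Let A_k(n) and B_k(n) denote the coefficients in the expansions λ(x)P_n(x+1) = Σ_k A_k(n)P_{n+k}(x) and φ(x)P_n(x−1) = Σ_k B_k(n)P_{n+k}(x). Then for all n and all integers k with −q−1 ≤ k ≤ p and n+k ≥ 0, one has A_k(n) = (h_n / h_{n+k}) · B_{−k}(n+k). -/
open Polynomial

/-- relation between the connection coefficients A_k(n) and B_k(n):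
A_k(n) = (hₙ / h_{n+k}) · B_{−k}(n+k) for −q−1 ≤ k ≤ p with n+k ≥ 0. -/
theorem laguerre_freud_AB_relation
    (L : Polynomial ℂ →ₗ[ℂ] ℂ) (P : ℕ → Polynomial ℂ) (h : ℕ → ℂ)
    (hmonic : ∀ n, (P n).Monic) (hdeg : ∀ n, (P n).natDegree = n)
    (hh : ∀ n, h n ≠ 0)
    (horth : ∀ n m, L (P n * P m) = if n = m then h n else 0)
    (p q : ℕ) (lam phi : Polynomial ℂ)
    (hlam : lam.degree = (p : ℕ)) (hphi : phi.degree = (q + 1 : ℕ))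
    (hPearson : ∀ π : Polynomial ℂ, L (lam * π) = L (phi * π.comp (X - 1)))
    (A B : ℕ → ℤ → ℂ)
    (hA : ∀ n : ℕ,
      lam * (P n).comp (X + 1) =
        ∑ k ∈ Finset.Icc (max (-(n : ℤ)) (-(q : ℤ) - 1)) (p : ℤ),
          A n k • P ((n : ℤ) + k).toNat)
    (hB : ∀ n : ℕ,
      phi * (P n).comp (X - 1) =
        ∑ k ∈ Finset.Icc (max (-(n : ℤ)) (-(p : ℤ))) ((q : ℤ) + 1),
          B n k • P ((n : ℤ) + k).toNat) :
    ∀ (n : ℕ) (k : ℤ), -(q : ℤ) - 1 ≤ k → k ≤ (p : ℤ) → 0 ≤ (n : ℤ) + k →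
      A n k = h n / h ((n : ℤ) + k).toNat * B ((n : ℤ) + k).toNat (-k) := by
  intro n k hk1 hk2 hk3
  set m : ℕ := ((n : ℤ) + k).toNat with hm
  have hmz : (m : ℤ) = (n : ℤ) + k := Int.toNat_of_nonneg hk3
  -- Step 1: apply L to (λ Pₙ(x+1)) P_m using hA
  have step1 : L (lam * (P n).comp (X + 1) * P m) = A n k * h m := by
    rw [hA n, Finset.sum_mul, map_sum]
    rw [Finset.sum_eq_single_of_mem k]
    · have hnk : ((n : ℤ) + k).toNat = m := rfl
      rw [smul_mul_assoc, map_smul, hnk, horth, if_pos rfl, smul_eq_mul]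
    · rw [Finset.mem_Icc]
      constructor
      · exact max_le (by omega) (by omega)
      · exact hk2
    · intro j hj hjk
      rw [Finset.mem_Icc] at hj
      have hj' : -(n : ℤ) ≤ j := le_trans (le_max_left _ _) hj.1
      have hne : ((n : ℤ) + j).toNat ≠ m := by omega
      rw [smul_mul_assoc, map_smul, horth, if_neg hne, smul_zero]
  -- Step 2: apply Pearson and hB
  have step2 : L (lam * (P n).comp (X + 1) * P m) = B m (-k) * h n := by
    rw [mul_assoc, hPearson]
    have hcomp : (((P n).comp (X + 1) * (P m : Polynomial ℂ)).comp (X - 1))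
        = P n * (P m).comp (X - 1) := by
      rw [mul_comp, comp_assoc]
      have : ((X : Polynomial ℂ) + 1).comp (X - 1) = X := by
        simp [add_comp]
      rw [this, comp_X]
    rw [hcomp]
    have hre : phi * (P n * (P m).comp (X - 1)) = phi * (P m).comp (X - 1) * P n := by
      ring
    rw [hre, hB m, Finset.sum_mul, map_sum]
    rw [Finset.sum_eq_single_of_mem (-k)]
    · have hnk : ((m : ℤ) + (-k)).toNat = n := by omega
      rw [smul_mul_assoc, map_smul, hnk, horth, if_pos rfl, smul_eq_mul]
    · rw [Finset.mem_Icc]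
      constructor
      · exact max_le (by omega) (by omega)
      · omega
    · intro j hj hjk
      rw [Finset.mem_Icc] at hj
      have hj' : -(m : ℤ) ≤ j := le_trans (le_max_left _ _) hj.1
      have hne : ((m : ℤ) + j).toNat ≠ n := by omega
      rw [smul_mul_assoc, map_smul, horth, if_neg hne, smul_zero]
  have key : A n k * h m = B m (-k) * h n := step1.symm.trans step2
  rw [div_mul_eq_mul_div, eq_div_iff (hh m)]
  linear_combination key
end

section
/- Let L be a linear functional on complex polynomials, (P_n)_{n≥0} a monic orthogonal polynomial sequence for L with three-term recurrence coefficients β_n, γ_n, satisfying the Pearson equation with polynomials λ (deg λ = p) and φ (deg φ = q+1), and let A_k(n) be the coefficients of the expansion λ(x)P_n(x+1) = Σ_{k=−q−1}^{p} A_k(n)P_{n+k}(x), with the conventions A_{p+1}(n) = 0 and A_{−q−2}(n) = 0. Then for every n ≥ q+2 and every integer k with −q−1 ≤ k ≤ p: γ_{n+k+1} A_{k+1}(n) − γ_n A_{k+1}(n−1) + A_{k−1}(n) − A_{k−1}(n+1) = (β_n − β_{n+k} − 1) A_k(n). -/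
open Polynomial

/-- Theorem 1 of the paper: the recurrence
γ_{n+k+1} A_{k+1}(n) − γₙ A_{k+1}(n−1) + A_{k−1}(n) − A_{k−1}(n+1)
  = (βₙ − β_{n+k} − 1) A_k(n), for n ≥ q+2 and −q−1 ≤ k ≤ p,
with the conventions A_{p+1}(n) = 0 = A_{−q−2}(n). -/
theorem laguerre_freud_A_recurrence
    (L : Polynomial ℂ →ₗ[ℂ] ℂ) (P : ℕ → Polynomial ℂ) (h : ℕ → ℂ)
    (hmonic : ∀ n, (P n).Monic) (hdeg : ∀ n, (P n).natDegree = n)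
    (hh : ∀ n, h n ≠ 0)
    (horth : ∀ n m, L (P n * P m) = if n = m then h n else 0)
    (β γ : ℕ → ℂ) (hγ0 : γ 0 = 0)
    (hrec : ∀ n : ℕ, X * P n = P (n + 1) + C (β n) * P n + C (γ n) * P (n - 1))
    (p q : ℕ) (lam phi : Polynomial ℂ)
    (hlam : lam.degree = (p : ℕ)) (hphi : phi.degree = (q + 1 : ℕ))
    (hPearson : ∀ π : Polynomial ℂ, L (lam * π) = L (phi * π.comp (X - 1)))
    (A : ℕ → ℤ → ℂ)
    (hA : ∀ n : ℕ,
      lam * (P n).comp (X + 1) =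
        ∑ k ∈ Finset.Icc (max (-(n : ℤ)) (-(q : ℤ) - 1)) (p : ℤ),
          A n k • P ((n : ℤ) + k).toNat)
    (hAtop : ∀ n : ℕ, A n ((p : ℤ) + 1) = 0)
    (hAbot : ∀ n : ℕ, A n (-(q : ℤ) - 2) = 0) :
    ∀ n : ℕ, q + 2 ≤ n → ∀ k : ℤ, -(q : ℤ) - 1 ≤ k → k ≤ (p : ℤ) →
      γ ((n : ℤ) + k + 1).toNat * A n (k + 1) - γ n * A (n - 1) (k + 1)
        + A n (k - 1) - A (n + 1) (k - 1)
        = (β n - β ((n : ℤ) + k).toNat - 1) * A n k := by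
  intro n hn k hk1 hk2
  have horth' : ∀ a b : ℕ, L (P a * P b) = if a = b then h b else 0 := by
    intro a b
    rw [horth]
    by_cases hab : a = b
    · subst hab; simp
    · simp [hab]
  set I : Finset ℤ := Finset.Icc (-(q : ℤ) - 1) (p : ℤ) with hI
  have hqn : (q : ℤ) + 2 ≤ (n : ℤ) := by exact_mod_cast hn
  set m : ℕ := ((n : ℤ) + k).toNat with hm
  -- restricted expansion (the max is -q-1 for large n)
  have hA' : ∀ n' : ℕ, (q : ℤ) + 1 ≤ (n' : ℤ) →
      lam * (P n').comp (X + 1) = ∑ j ∈ I, A n' j • P ((n' : ℤ) + j).toNat := by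
    intro n' h'
    rw [hA n']
    congr 1
    rw [hI]
    congr 1
    omega
  -- key lemma: L of (expansion of lam * P n'(x+1)) times P m
  have key : ∀ (n' : ℕ) (j₀ : ℤ), (q : ℤ) + 1 ≤ (n' : ℤ) → -(q : ℤ) - 2 ≤ j₀ →
      j₀ ≤ (p : ℤ) + 1 → (n' : ℤ) + j₀ = (n : ℤ) + k →
      L ((lam * (P n').comp (X + 1)) * P m) = A n' j₀ * h m := by
    intro n' j₀ hn' hj1 hj2 hj3
    rw [hA' n' hn', Finset.sum_mul, map_sum]
    have step : ∀ j ∈ I, L ((A n' j • P ((n' : ℤ) + j).toNat) * P m)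
        = if j = j₀ then A n' j₀ * h m else 0 := by
      intro j hj
      rw [hI, Finset.mem_Icc] at hj
      rw [smul_mul_assoc, map_smul, horth', smul_eq_mul]
      by_cases hc : j = j₀
      · subst hc
        have hMm : ((n' : ℤ) + j).toNat = m := by rw [hm]; omega
        rw [if_pos hMm, if_pos rfl]
      · have hMm : ((n' : ℤ) + j).toNat ≠ m := by rw [hm]; omega
        rw [if_neg hMm, if_neg hc, mul_zero]
    rw [Finset.sum_congr rfl step, Finset.sum_ite_eq' I j₀]
    by_cases hmem : j₀ ∈ I
    · rw [if_pos hmem]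
    · rw [if_neg hmem]
      rw [hI, Finset.mem_Icc] at hmem
      have : j₀ = -(q : ℤ) - 2 ∨ j₀ = (p : ℤ) + 1 := by omega
      rcases this with hj | hj <;> rw [hj]
      · rw [hAbot, zero_mul]
      · rw [hAtop, zero_mul]
  -- the sum side
  have sumside : L ((∑ j ∈ I, A n j • ((X + 1) * P ((n : ℤ) + j).toNat)) * P m)
      = A n (k - 1) * h m + (β m + 1) * (A n k * h m)
        + γ (((n : ℤ) + k + 1).toNat) * (A n (k + 1) * h m) := by
    rw [Finset.sum_mul, map_sum]
    have step : ∀ j ∈ I, L ((A n j • ((X + 1) * P ((n : ℤ) + j).toNat)) * P m)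
        = (if j = k - 1 then A n (k - 1) * h m else 0)
          + (if j = k then (β m + 1) * (A n k * h m) else 0)
          + (if j = k + 1 then γ (((n : ℤ) + k + 1).toNat) * (A n (k + 1) * h m) else 0) := by
      intro j hj
      rw [hI, Finset.mem_Icc] at hj
      set M : ℕ := ((n : ℤ) + j).toNat with hM
      have hrecM : (X + 1) * P M = P (M + 1) + C (β M + 1) * P M + C (γ M) * P (M - 1) := by
        rw [add_mul, one_mul, hrec M, C_add, C_1]; ring
      have e2 : C (β M + 1) * P M * P m = (β M + 1) • (P M * P m) := by
        rw [Polynomial.smul_eq_C_mul, mul_assoc]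
      have e3 : C (γ M) * P (M - 1) * P m = (γ M) • (P (M - 1) * P m) := by
        rw [Polynomial.smul_eq_C_mul, mul_assoc]
      rw [smul_mul_assoc, map_smul, hrecM, add_mul, add_mul, map_add, map_add,
        e2, e3, map_smul, map_smul, horth', horth', horth', smul_eq_mul, smul_eq_mul,
        smul_eq_mul, mul_add, mul_add]
      congr 1
      · congr 1
        · -- first term: M + 1 = m ↔ j = k - 1
          by_cases hc : j = k - 1
          · subst hc
            have h1 : M + 1 = m := by rw [hM, hm]; omega
            rw [if_pos h1, if_pos rfl]
          · have h1 : M + 1 ≠ m := by rw [hM, hm]; omega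
            rw [if_neg h1, if_neg hc, mul_zero]
        · -- second term: M = m ↔ j = k
          by_cases hc : j = k
          · subst hc
            have h1 : M = m := by rw [hM, hm]
            rw [if_pos h1, h1, if_pos rfl]
            ring
          · have h1 : M ≠ m := by rw [hM, hm]; omega
            rw [if_neg h1, if_neg hc, mul_zero, mul_zero]
      · -- third term: M - 1 = m ↔ j = k + 1
        by_cases hc : j = k + 1
        · subst hc
          have h1 : M - 1 = m := by rw [hM, hm]; omega
          have h2 : M = ((n : ℤ) + k + 1).toNat := by rw [hM]; omega
          rw [if_pos h1, h2, if_pos rfl]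
          ring
        · have h1 : M - 1 ≠ m := by rw [hM, hm]; omega
          rw [if_neg h1, if_neg hc, mul_zero, mul_zero]
    rw [Finset.sum_congr rfl step, Finset.sum_add_distrib, Finset.sum_add_distrib,
      Finset.sum_ite_eq' I (k - 1), Finset.sum_ite_eq' I k, Finset.sum_ite_eq' I (k + 1)]
    have hkI : k ∈ I := by rw [hI, Finset.mem_Icc]; exact ⟨hk1, hk2⟩
    rw [if_pos hkI]
    congr 1
    · congr 1
      by_cases h1 : k - 1 ∈ I
      · rw [if_pos h1]
      · rw [if_neg h1]
        rw [hI, Finset.mem_Icc] at h1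
        have : k - 1 = -(q : ℤ) - 2 := by omega
        rw [this, hAbot, zero_mul]
    · by_cases h1 : k + 1 ∈ I
      · rw [if_pos h1]
      · rw [if_neg h1]
        rw [hI, Finset.mem_Icc] at h1
        have : k + 1 = (p : ℤ) + 1 := by omega
        rw [this, hAtop, zero_mul, mul_zero]
  -- the polynomial identity
  have hcomp : (X + 1) * (P n).comp (X + 1)
      = (P (n + 1)).comp (X + 1) + C (β n) * (P n).comp (X + 1)
        + C (γ n) * (P (n - 1)).comp (X + 1) := by
    have := congrArg (fun f => f.comp (X + 1)) (hrec n)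
    simpa [mul_comp, add_comp, X_comp, C_comp] using this
  have polyeq : lam * (P (n + 1)).comp (X + 1) + C (β n) * (lam * (P n).comp (X + 1))
      + C (γ n) * (lam * (P (n - 1)).comp (X + 1))
      = ∑ j ∈ I, A n j • ((X + 1) * P ((n : ℤ) + j).toNat) := by
    have step1 : lam * (P (n + 1)).comp (X + 1) + C (β n) * (lam * (P n).comp (X + 1))
        + C (γ n) * (lam * (P (n - 1)).comp (X + 1))
        = (X + 1) * (lam * (P n).comp (X + 1)) := by
      have := congrArg (fun f => lam * f) hcomp
      linear_combination -this
    rw [step1, hA' n (by omega), Finset.mul_sum]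
    refine Finset.sum_congr rfl fun j hj => ?_
    rw [mul_smul_comm]
  -- apply L(· * P m) to polyeq
  have hE := congrArg (fun f => L (f * P m)) polyeq
  rw [sumside] at hE
  have eC1 : C (β n) * (lam * (P n).comp (X + 1)) * P m
      = (β n) • ((lam * (P n).comp (X + 1)) * P m) := by
    rw [Polynomial.smul_eq_C_mul, mul_assoc]
  have eC2 : C (γ n) * (lam * (P (n - 1)).comp (X + 1)) * P m
      = (γ n) • ((lam * (P (n - 1)).comp (X + 1)) * P m) := by
    rw [Polynomial.smul_eq_C_mul, mul_assoc]
  rw [add_mul, add_mul, map_add, map_add, eC1, eC2, map_smul, map_smul, smul_eq_mul,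
    smul_eq_mul] at hE
  have hn1 : ((n - 1 : ℕ) : ℤ) = (n : ℤ) - 1 := by omega
  rw [key (n + 1) (k - 1) (by push_cast; omega) (by omega) (by omega) (by push_cast; omega),
    key n k (by omega) (by omega) (by omega) rfl,
    key (n - 1) (k + 1) (by omega) (by omega) (by omega) (by omega)] at hE
  refine mul_right_cancel₀ (hh m) ?_
  linear_combination -hE
end

section
/- Let L be a linear functional on complex polynomials, (P_n)_{n≥0} a monic orthogonal polynomial sequence for L with three-term recurrence coefficients β_n, γ_n, satisfying the Pearson equation with polynomials λ (deg λ = p) and a MONIC φ of degree q+1, and let A_k(n) be the coefficients of λ(x)P_n(x+1) = Σ_{k=−q−1}^{p} A_k(n)P_{n+k}(x). Then for every n ≥ q+1, the bottom coefficient satisfies A_{−q−1}(n) = γ_n · γ_{n−1} · ⋯ · γ_{n−q} = Π_{j=0}^{q} γ_{n−j}. -/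
open Polynomial

private lemma orth_lower (L : Polynomial ℂ →ₗ[ℂ] ℂ) (P : ℕ → Polynomial ℂ) (h : ℕ → ℂ)
    (hmonic : ∀ n, (P n).Monic) (hdeg : ∀ n, (P n).natDegree = n)
    (horth : ∀ n m, L (P n * P m) = if n = m then h n else 0) :
    ∀ d : ℕ, ∀ S : Polynomial ℂ, S.degree < (d : ℕ) → ∀ n, d ≤ n → L (P n * S) = 0 := by
  intro d
  induction d with
  | zero =>
    intro S hS n hn
    have : S = 0 := degree_eq_bot.mp (Nat.WithBot.lt_zero_iff.mp (by exact_mod_cast hS))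
    simp [this]
  | succ d ih =>
    intro S hS n hn
    set c := S.coeff d with hc
    have hSd : S.degree ≤ (d : ℕ) := by
      rw [Polynomial.degree_le_iff_coeff_zero]
      intro m hm
      have hdm : d < m := by exact_mod_cast hm
      exact (Polynomial.degree_lt_iff_coeff_zero S (d + 1)).mp hS m (by exact_mod_cast hdm)
    have hS' : (S - C c * P d).degree < (d : ℕ) := by
      rw [Polynomial.degree_lt_iff_coeff_zero]
      intro m hm
      rcases eq_or_lt_of_le hm with rfl | hm'
      · have hPd : (P d).coeff d = 1 := by
          have := (hmonic d).coeff_natDegree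
          rwa [hdeg d] at this
        simp [coeff_sub, coeff_C_mul, hPd, ← hc]
      · have hm2 : (d : ℕ) < m := hm'
        have h1 : S.coeff m = 0 := coeff_eq_zero_of_degree_lt (lt_of_le_of_lt hSd (by exact_mod_cast hm2))
        have h2 : (P d).coeff m = 0 := coeff_eq_zero_of_natDegree_lt (by rw [hdeg]; exact hm2)
        simp [coeff_C_mul, h1, h2]
    have hrw : P n * S = P n * (S - C c * P d) + c • (P n * P d) := by
      rw [smul_eq_C_mul]; ring
    rw [hrw, map_add, map_smul, ih _ hS' n (le_trans (Nat.le_succ d) hn), horth,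
      if_neg (by omega), zero_add, smul_eq_mul, mul_zero]

private lemma L_mul_monic (L : Polynomial ℂ →ₗ[ℂ] ℂ) (P : ℕ → Polynomial ℂ) (h : ℕ → ℂ)
    (hmonic : ∀ n, (P n).Monic) (hdeg : ∀ n, (P n).natDegree = n)
    (horth : ∀ n m, L (P n * P m) = if n = m then h n else 0)
    (n : ℕ) (R : Polynomial ℂ) (hR : R.Monic) (hRn : R.natDegree = n) :
    L (P n * R) = h n := by
  have hdegR : R.degree = (n : ℕ) := by
    rw [degree_eq_natDegree hR.ne_zero, hRn]
  have hdegP : (P n).degree = (n : ℕ) := by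
    rw [degree_eq_natDegree (hmonic n).ne_zero, hdeg]
  have hsub : (R - P n).degree < (n : ℕ) := by
    have := degree_sub_lt (hdegR.trans hdegP.symm) hR.ne_zero
      (by rw [hR.leadingCoeff, (hmonic n).leadingCoeff])
    rwa [hdegR] at this
  have hrw : P n * R = P n * (R - P n) + P n * P n := by ring
  rw [hrw, map_add, orth_lower L P h hmonic hdeg horth n _ hsub n le_rfl, zero_add,
    horth, if_pos rfl]

private lemma telescope (h γ : ℕ → ℂ) (hh : ∀ n, h n ≠ 0)
    (hγh : ∀ n : ℕ, 1 ≤ n → γ n = h n / h (n - 1)) :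
    ∀ q n : ℕ, q + 1 ≤ n →
      ∏ j ∈ Finset.range (q + 1), γ (n - j) = h n / h (n - (q + 1)) := by
  intro q
  induction q with
  | zero => intro n hn; simpa using hγh n hn
  | succ q ih =>
    intro n hn
    rw [Finset.prod_range_succ, ih n (by omega), hγh (n - (q + 1)) (by omega)]
    have e : n - (q + 1) - 1 = n - (q + 1 + 1) := by omega
    rw [e]
    have h1 := hh (n - (q + 1))
    have h2 := hh (n - (q + 1 + 1))
    field_simp

/-- the bottom connection coefficient is
A_{−q−1}(n) = γₙ γ_{n−1} ⋯ γ_{n−q} for n ≥ q+1, when φ is monic of degree q+1. -/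
theorem laguerre_freud_A_bottom
    (L : Polynomial ℂ →ₗ[ℂ] ℂ) (P : ℕ → Polynomial ℂ) (h : ℕ → ℂ)
    (hmonic : ∀ n, (P n).Monic) (hdeg : ∀ n, (P n).natDegree = n)
    (hh : ∀ n, h n ≠ 0)
    (horth : ∀ n m, L (P n * P m) = if n = m then h n else 0)
    (β γ : ℕ → ℂ) (hγ0 : γ 0 = 0)
    (hrec : ∀ n : ℕ, X * P n = P (n + 1) + C (β n) * P n + C (γ n) * P (n - 1))
    (hγh : ∀ n : ℕ, 1 ≤ n → γ n = h n / h (n - 1))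
    (p q : ℕ) (lam phi : Polynomial ℂ)
    (hlam : lam.degree = (p : ℕ))
    (hphimonic : phi.Monic) (hphi : phi.degree = (q + 1 : ℕ))
    (hPearson : ∀ π : Polynomial ℂ, L (lam * π) = L (phi * π.comp (X - 1)))
    (A : ℕ → ℤ → ℂ)
    (hA : ∀ n : ℕ,
      lam * (P n).comp (X + 1) =
        ∑ k ∈ Finset.Icc (max (-(n : ℤ)) (-(q : ℤ) - 1)) (p : ℤ),
          A n k • P ((n : ℤ) + k).toNat) :
    ∀ n : ℕ, q + 1 ≤ n →
      A n (-(q : ℤ) - 1) = ∏ j ∈ Finset.range (q + 1), γ (n - j) := by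
  intro n hn
  set m := n - (q + 1) with hm
  have hmax : max (-(n : ℤ)) (-(q : ℤ) - 1) = -(q : ℤ) - 1 := by
    apply max_eq_right; omega
  -- LHS : L (lam * Pn(x+1) * P m) = A n (-q-1) * h m
  have e1 : lam * (P n).comp (X + 1) * P m =
      ∑ k ∈ Finset.Icc (-(q : ℤ) - 1) (p : ℤ),
        A n k • (P ((n : ℤ) + k).toNat * P m) := by
    rw [hA n, hmax, Finset.sum_mul]
    simp [smul_mul_assoc]
  have e2 : L (lam * (P n).comp (X + 1) * P m) = A n (-(q : ℤ) - 1) * h m := by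
    rw [e1, map_sum]
    rw [Finset.sum_eq_single (-(q : ℤ) - 1)]
    · rw [map_smul, smul_eq_mul, horth]
      have : ((n : ℤ) + (-(q : ℤ) - 1)).toNat = m := by omega
      rw [this, if_pos rfl]
    · intro k hk hne
      have hk' := Finset.mem_Icc.mp hk
      rw [map_smul, smul_eq_mul, horth, if_neg, mul_zero]
      intro hEq
      apply hne
      omega
    · intro habs
      exact absurd (Finset.mem_Icc.mpr ⟨le_refl _, by omega⟩) habs
  -- RHS via Pearson
  have e3 : L (lam * (P n).comp (X + 1) * P m) = L (phi * (P n * (P m).comp (X - 1))) := by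
    rw [mul_assoc, hPearson]
    congr 2
    rw [mul_comp, Polynomial.comp_assoc]
    congr 2
    simp
  -- the monic product
  have hφdeg : phi.natDegree = q + 1 := natDegree_eq_of_degree_eq_some hphi
  have hRmonic : (phi * (P m).comp (X - 1)).Monic := by
    have : ((P m).comp (X - 1)).Monic := by
      have := (hmonic m).comp_X_sub_C (r := (1 : ℂ))
      simpa using this
    exact hphimonic.mul this
  have hRdeg : (phi * (P m).comp (X - 1)).natDegree = n := by
    rw [natDegree_mul hphimonic.ne_zero]
    · rw [hφdeg, natDegree_comp]
      have : (X - 1 : Polynomial ℂ).natDegree = 1 := by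
        have : (X - 1 : Polynomial ℂ) = X - C 1 := by simp
        rw [this, natDegree_X_sub_C]
      rw [this, hdeg, mul_one, hm]
      omega
    · have : ((P m).comp (X - 1)).Monic := by
        have := (hmonic m).comp_X_sub_C (r := (1 : ℂ))
        simpa using this
      exact this.ne_zero
  have e4 : L (phi * (P n * (P m).comp (X - 1))) = h n := by
    have hrw : phi * (P n * (P m).comp (X - 1)) = P n * (phi * (P m).comp (X - 1)) := by ring
    rw [hrw]
    exact L_mul_monic L P h hmonic hdeg horth n _ hRmonic hRdeg
  have key : A n (-(q : ℤ) - 1) * h m = h n := by rw [← e2, e3, e4]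
  rw [telescope h γ hh hγh q n hn, ← hm, eq_div_iff (hh m)]
  exact key
end

section
/- Let a > 0 and 0 < z < 1, let L be the Meixner moment functional L[f] = Σ_{x=0}^{∞} f(x)·(a)_x z^x / x!, and let (P_n)_{n≥0} be a monic orthogonal polynomial sequence for L with recurrence coefficients β_n, γ_n. Then for all n ≥ 0 the structure relation z(x+a)·P_n(x+1) = γ_n P_{n−1}(x) + (1−z)(γ_{n+1} − γ_n) P_n(x) + z P_{n+1}(x) holds as an identity of polynomials (with P_{−1} = 0, γ_0 = 0). -/
/-!
Shifting the summation index and using `(x + 1) w(x + 1) = z (x + a) w(x)` gives the discrete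
Pearson identity `L[σ · r(x + 1)] = L[x · r(x)]` for `σ = z (x + a)`. Hence `Q_n = σ · P_n(x + 1)`,
of degree `n + 1` with leading coefficient `z`, satisfies `L[P_k Q_n] = L[P_n · x P_k(x - 1)]`,
which vanishes for `k + 1 < n` and equals `h_n = γ_n h_{n-1}` for `k + 1 = n`; so
`Q_n = z P_{n+1} + c_n P_n + γ_n P_{n-1}`. The coefficient `c_n` is found by computing
`L[P_n (x + 1) Q_n]` twice: with the recurrence for `P_n`, and with the recurrence that `Q_n`
inherits from it under `x ↦ x + 1`.
-/

open Polynomial Filter Topology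

theorem Polynomial.IsMonicOfDegree.coeff_eq_ite_of_le {R : Type*} [Semiring R] [Nontrivial R]
    {p : R[X]} {d k : ℕ}
    (hp : IsMonicOfDegree p d) (hdk : d ≤ k) : p.coeff k = if d = k then 1 else 0 := by
  split_ifs with h
  · exact h ▸ ((isMonicOfDegree_iff p d).1 hp).2
  · exact coeff_eq_zero_of_natDegree_lt (by rw [hp.natDegree_eq]; omega)

theorem Polynomial.IsMonicOfDegree.comp_X_add_one {R : Type*} [Semiring R] [Nontrivial R]
    {p : R[X]} {n : ℕ} (hp : IsMonicOfDegree p n) : IsMonicOfDegree (p.comp (X + 1)) n := by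
  simpa using hp.comp one_ne_zero (isMonicOfDegree_X_add_one (1 : R))

theorem Polynomial.IsMonicOfDegree.comp_X_sub_one {R : Type*} [Ring R] [Nontrivial R]
    {p : R[X]} {n : ℕ} (hp : IsMonicOfDegree p n) : IsMonicOfDegree (p.comp (X - 1)) n := by
  simpa using hp.comp one_ne_zero (isMonicOfDegree_X_sub_one (1 : R))

structure IsMonicOrthogonal {K : Type*} [Field K] (L : K[X] →ₗ[K] K) (P : ℕ → K[X])
    (h : ℕ → K) : Prop where
  isMonicOfDegree : ∀ n, IsMonicOfDegree (P n) n
  apply_mul : ∀ n m, L (P n * P m) = if n = m then h n else 0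

namespace IsMonicOrthogonal

variable {K : Type*} [Field K] {L : K[X] →ₗ[K] K} {P : ℕ → K[X]} {h β γ : ℕ → K}

def toSequence (hP : IsMonicOrthogonal L P h) : Sequence K where
  elems' := P
  degree_eq' n := by
    rw [degree_eq_natDegree (hP.isMonicOfDegree n).ne_zero, (hP.isMonicOfDegree n).natDegree_eq]

theorem apply_mul_eq_coeff_mul (hP : IsMonicOrthogonal L P h) {k : ℕ} {q : K[X]}
    (hq : q.natDegree ≤ k) : L (P k * q) = q.coeff k * h k := by
  have hspan : q ∈ Submodule.span K (P '' Set.Iic k) := by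
    rw [show P = hP.toSequence from rfl, hP.toSequence.span_degreeLE fun i _ => by
      simp [show hP.toSequence i = P i from rfl, (hP.isMonicOfDegree i).leadingCoeff_eq]]
    exact mem_degreeLE.2 (degree_le_of_natDegree_le hq)
  refine (LinearMap.eqOn_span (f := L ∘ₗ LinearMap.mulLeft K (P k)) (g := h k • lcoeff K k)
    ?_ hspan).trans (mul_comm _ _)
  rintro _ ⟨j, hj, rfl⟩
  simp [hP.apply_mul, (hP.isMonicOfDegree j).coeff_eq_ite_of_le (Set.mem_Iic.1 hj), eq_comm]

theorem eq_zero_of_forall_apply_mul_eq_zero (hP : IsMonicOrthogonal L P h) (hh : ∀ n, h n ≠ 0)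
    {N : ℕ} {q : K[X]} (hq : q.natDegree ≤ N) (horth : ∀ k ≤ N, L (P k * q) = 0) : q = 0 := by
  by_contra hq0
  have := horth _ hq
  rw [hP.apply_mul_eq_coeff_mul le_rfl, coeff_natDegree] at this
  exact mul_ne_zero (leadingCoeff_ne_zero.2 hq0) (hh _) this

theorem apply_mul_C_mul (hP : IsMonicOrthogonal L P h) (k m : ℕ) (c : K) :
    L (P k * (C c * P m)) = if k = m then c * h k else 0 := by
  rw [mul_left_comm, ← smul_eq_C_mul, map_smul, hP.apply_mul, smul_eq_mul, mul_ite, mul_zero]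

theorem apply_mul_C_mul_pred (hP : IsMonicOrthogonal L P h) (hγ0 : γ 0 = 0)
    (k n : ℕ) : L (P k * (C (γ n) * P (n - 1))) = if k + 1 = n then γ n * h k else 0 := by
  cases n with
  | zero => simp [hγ0]
  | succ m => simp [hP.apply_mul_C_mul]

theorem norm_succ (hP : IsMonicOrthogonal L P h)
    (hrec : ∀ n, X * P n = P (n + 1) + C (β n) * P n + C (γ n) * P (n - 1)) (n : ℕ) :
    h (n + 1) = γ (n + 1) * h n := by
  have hlow : L (P (n + 1) * (X * P n)) = h (n + 1) := by
    have hX := (isMonicOfDegree_X (R := K)).mul (hP.isMonicOfDegree n)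
    rw [hP.apply_mul_eq_coeff_mul (hX.natDegree_eq.trans (add_comm 1 n)).le,
      add_comm n 1, hX.coeff_eq_ite_of_le le_rfl, if_pos rfl, one_mul, add_comm]
  have hup : L (P n * (X * P (n + 1))) = γ (n + 1) * h n := by
    simp [hrec (n + 1), mul_add, hP.apply_mul_C_mul, hP.apply_mul,
      show n ≠ n + 1 + 1 by omega]
  rw [← hlow, ← hup]
  congr 1
  ring

theorem apply_mul_shift_of_lt (hP : IsMonicOrthogonal L P h) {σ : K[X]}
    (hσ : ∀ r, L (σ * r.comp (X + 1)) = L (X * r)) {k n : ℕ} (hkn : k < n) :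
    L (P k * (σ * (P n).comp (X + 1))) = if k + 1 = n then h n else 0 := by
  have hshift :
      P k * (σ * (P n).comp (X + 1)) = σ * (P n * (P k).comp (X - 1)).comp (X + 1) := by
    rw [mul_comp, comp_assoc, sub_comp, X_comp, one_comp, add_sub_cancel_right, comp_X]
    ring
  have hdeg := (isMonicOfDegree_X (R := K)).mul (hP.isMonicOfDegree k).comp_X_sub_one
  rw [add_comm 1 k] at hdeg
  rw [hshift, hσ, mul_left_comm, hP.apply_mul_eq_coeff_mul (hdeg.natDegree_eq.trans_le hkn),
    hdeg.coeff_eq_ite_of_le hkn, ite_mul, one_mul, zero_mul]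

theorem apply_succ_mul_shift (hP : IsMonicOrthogonal L P h) {σ : K[X]}
    (hσdeg : σ.natDegree ≤ 1) (n : ℕ) :
    L (P (n + 1) * (σ * (P n).comp (X + 1))) = σ.coeff 1 * h (n + 1) := by
  have hc := (hP.isMonicOfDegree n).comp_X_add_one
  rw [add_comm n 1, hP.apply_mul_eq_coeff_mul
      (natDegree_mul_le.trans (add_le_add hσdeg hc.natDegree_eq.le)),
    coeff_mul_add_eq_of_natDegree_le hσdeg hc.natDegree_eq.le, hc.coeff_eq_ite_of_le le_rfl,
    if_pos rfl, mul_one]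

theorem apply_self_mul_shift (hP : IsMonicOrthogonal L P h)
    (hrec : ∀ n, X * P n = P (n + 1) + C (β n) * P n + C (γ n) * P (n - 1)) (hγ0 : γ 0 = 0)
    {σ : K[X]} (hσdeg : σ.natDegree ≤ 1) (hσ : ∀ r, L (σ * r.comp (X + 1)) = L (X * r)) (n : ℕ) :
    L (P n * (σ * (P n).comp (X + 1))) = (1 - σ.coeff 1) * (γ (n + 1) - γ n) * h n := by
  set Q : ℕ → K[X] := fun m => σ * (P m).comp (X + 1)
  have hQrec : (X + 1) * Q n = Q (n + 1) + C (β n) * Q n + C (γ n) * Q (n - 1) := by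
    have := congrArg (fun p => σ * p.comp (X + 1)) (hrec n)
    simp only [mul_comp, add_comp, X_comp, C_comp] at this
    simp only [Q]
    linear_combination this
  have hPrec : (X + 1) * P n = P (n + 1) + C (β n + 1) * P n + C (γ n) * P (n - 1) := by
    rw [add_mul, hrec n, C_add, C_1]
    ring
  have key : L (P n * ((X + 1) * Q n)) = L (((X + 1) * P n) * Q n) := by ring_nf
  rw [hQrec, hPrec] at key
  simp only [mul_add, add_mul, ← smul_eq_C_mul, mul_smul_comm, smul_mul_assoc, map_add, map_smul,
    smul_eq_mul] at key
  have e1 : L (P n * Q (n + 1)) = h (n + 1) := by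
    rw [hP.apply_mul_shift_of_lt hσ n.lt_succ_self, if_pos rfl]
  have e2 : γ n * L (P n * Q (n - 1)) = γ n * (σ.coeff 1 * h n) := by
    cases n with
    | zero => rw [hγ0, zero_mul, zero_mul]
    | succ m => rw [Nat.add_sub_cancel, hP.apply_succ_mul_shift hσdeg]
  have e3 : L (P (n + 1) * Q n) = σ.coeff 1 * h (n + 1) := hP.apply_succ_mul_shift hσdeg n
  have e4 : γ n * L (P (n - 1) * Q n) = γ n * h n := by
    cases n with
    | zero => rw [hγ0, zero_mul, zero_mul]
    | succ m => rw [Nat.add_sub_cancel, hP.apply_mul_shift_of_lt hσ m.lt_succ_self, if_pos rfl]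
  linear_combination -key + e1 + e2 - e3 - e4 + (1 - σ.coeff 1) * hP.norm_succ hrec n

theorem structure_relation (hP : IsMonicOrthogonal L P h) (hh : ∀ n, h n ≠ 0)
    (hrec : ∀ n, X * P n = P (n + 1) + C (β n) * P n + C (γ n) * P (n - 1)) (hγ0 : γ 0 = 0)
    {σ : K[X]} (hσdeg : σ.natDegree ≤ 1) (hσ : ∀ r, L (σ * r.comp (X + 1)) = L (X * r)) (n : ℕ) :
    σ * (P n).comp (X + 1) = C (γ n) * P (n - 1) + C ((1 - σ.coeff 1) * (γ (n + 1) - γ n)) * P n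
      + C (σ.coeff 1) * P (n + 1) := by
  have hdeg : ∀ m ≤ n + 1, (P m).natDegree ≤ n + 1 := fun m hm =>
    (hP.isMonicOfDegree m).natDegree_eq.trans_le hm
  rw [← sub_eq_zero]
  refine hP.eq_zero_of_forall_apply_mul_eq_zero hh (N := n + 1) ?_ fun k hk => ?_
  · refine (natDegree_sub_le _ _).trans (max_le ?_ ?_)
    · rw [add_comm n 1]
      exact natDegree_mul_le.trans
        (add_le_add hσdeg (hP.isMonicOfDegree n).comp_X_add_one.natDegree_eq.le)
    · exact natDegree_add_le_of_degree_le (natDegree_add_le_of_degree_le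
        ((natDegree_C_mul_le _ _).trans (hdeg _ (by omega)))
        ((natDegree_C_mul_le _ _).trans (hdeg _ (by omega))))
        ((natDegree_C_mul_le _ _).trans (hdeg _ le_rfl))
  rw [mul_sub, map_sub, sub_eq_zero, mul_add, mul_add, map_add, map_add,
    hP.apply_mul_C_mul_pred hγ0, hP.apply_mul_C_mul, hP.apply_mul_C_mul]
  rcases Nat.lt_or_ge k n with hkn | hkn
  · rw [hP.apply_mul_shift_of_lt hσ hkn, if_neg hkn.ne, if_neg (show k ≠ n + 1 by omega)]
    split_ifs with hk1
    · subst hk1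
      rw [hP.norm_succ hrec]
      ring
    · ring
  · obtain rfl | rfl : k = n ∨ k = n + 1 := by omega
    · rw [hP.apply_self_mul_shift hrec hγ0 hσdeg hσ, if_neg (by omega), if_pos rfl,
        if_neg (by omega)]
      ring
    · rw [hP.apply_succ_mul_shift hσdeg, if_neg (by omega), if_neg (by omega), if_pos rfl]
      ring

end IsMonicOrthogonal

theorem summable_eval_mul_of_tendsto_ratio {w : ℕ → ℝ} {r : ℝ} (hpos : ∀ x, 0 < w x)
    (hr : r < 1) (hw : Tendsto (fun x => w (x + 1) / w x) atTop (𝓝 r)) (p : ℝ[X]) :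
    Summable fun x : ℕ => p.eval (x : ℝ) * w x := by
  have hshifted (i : ℕ) : Summable fun x : ℕ => ((x : ℝ) + 1) ^ i * w x := by
    refine summable_of_ratio_test_tendsto_lt_one hr
      (Eventually.of_forall fun x => (mul_pos (by positivity) (hpos x)).ne') ?_
    have hlim := ((tendsto_add_mul_div_add_mul_atTop_nhds (2 : ℝ) 1 1 one_ne_zero).pow i).mul hw
    rw [div_one, one_pow, one_mul] at hlim
    refine hlim.congr fun x => ?_
    rw [Real.norm_of_nonneg (mul_pos (by positivity) (hpos _)).le,
      Real.norm_of_nonneg (mul_pos (by positivity) (hpos _)).le, mul_div_mul_comm, ← div_pow]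
    push_cast
    ring_nf
  have hmonomial (i : ℕ) : Summable fun x : ℕ => (x : ℝ) ^ i * w x :=
    (hshifted i).of_nonneg_of_le (fun x => mul_nonneg (by positivity) (hpos x).le)
      fun x => mul_le_mul_of_nonneg_right (pow_le_pow_left₀ (by positivity) (by linarith) i)
        (hpos x).le
  simp_rw [eval_eq_sum_range, Finset.sum_mul, mul_assoc]
  exact summable_sum fun i _ => (hmonomial i).mul_left _

noncomputable def discreteMomentFunctional (w : ℕ → ℝ)
    (hw : ∀ p : ℝ[X], Summable fun x : ℕ => p.eval (x : ℝ) * w x) : ℝ[X] →ₗ[ℝ] ℝ where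
  toFun p := ∑' x : ℕ, p.eval (x : ℝ) * w x
  map_add' p q := by simp only [eval_add, add_mul]; exact (hw p).tsum_add (hw q)
  map_smul' c p := by
    simp only [eval_smul, smul_eq_mul, mul_assoc, RingHom.id_apply]
    exact tsum_mul_left

theorem discreteMomentFunctional_mul_comp_X_add_one {w : ℕ → ℝ}
    (hw : ∀ p : ℝ[X], Summable fun x : ℕ => p.eval (x : ℝ) * w x) {σ : ℝ[X]}
    (hσ : ∀ x : ℕ, ((x : ℝ) + 1) * w (x + 1) = σ.eval (x : ℝ) * w x) (r : ℝ[X]) :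
    discreteMomentFunctional w hw (σ * r.comp (X + 1)) = discreteMomentFunctional w hw (X * r) := by
  change ∑' x : ℕ, (σ * r.comp (X + 1)).eval (x : ℝ) * w x
    = ∑' x : ℕ, (X * r).eval (x : ℝ) * w x
  rw [(hw (X * r)).tsum_eq_zero_add]
  simp only [eval_mul, eval_X, eval_comp, eval_add, eval_one, Nat.cast_zero, zero_mul, zero_add,
    Nat.cast_succ]
  refine tsum_congr fun x => ?_
  linear_combination -(r.eval ((x : ℝ) + 1)) * hσ x

noncomputable def meixnerWeight (a z : ℝ) (x : ℕ) : ℝ :=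
  (ascPochhammer ℝ x).eval a * z ^ x / x.factorial

theorem meixnerWeight_pos {a z : ℝ} (ha : 0 < a) (hz : 0 < z) (x : ℕ) : 0 < meixnerWeight a z x :=
  div_pos (mul_pos (ascPochhammer_pos x a ha) (pow_pos hz x)) (Nat.cast_pos.2 x.factorial_pos)

theorem succ_mul_meixnerWeight_succ (a z : ℝ) (x : ℕ) :
    ((x : ℝ) + 1) * meixnerWeight a z (x + 1) = z * (x + a) * meixnerWeight a z x := by
  simp only [meixnerWeight, ascPochhammer_succ_eval, Nat.factorial_succ, Nat.cast_mul,
    Nat.cast_succ, pow_succ]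
  field_simp
  ring

theorem tendsto_meixnerWeight_succ_div {a z : ℝ} (ha : 0 < a) (hz : 0 < z) :
    Tendsto (fun x => meixnerWeight a z (x + 1) / meixnerWeight a z x) atTop (𝓝 z) := by
  have hlim := (tendsto_add_mul_div_add_mul_atTop_nhds a 1 1 one_ne_zero).const_mul z
  rw [div_one, mul_one] at hlim
  refine hlim.congr fun x => ?_
  have hx := meixnerWeight_pos ha hz x
  rw [eq_div_iff hx.ne', ← mul_right_inj' (show (x : ℝ) + 1 ≠ 0 by positivity),
    succ_mul_meixnerWeight_succ]
  field_simp
  ring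

/-- structure relation for the Meixner polynomials:
z(x+a)·Pₙ(x+1) = γₙ P_{n−1}(x) + (1−z)(γ_{n+1} − γₙ) Pₙ(x) + z P_{n+1}(x). -/
theorem meixner_structure_relation_forward
    (a z : ℝ) (ha : 0 < a) (hz0 : 0 < z) (hz1 : z < 1)
    (w : ℕ → ℝ)
    (hw : ∀ x : ℕ, w x = (ascPochhammer ℝ x).eval a * z ^ x / x.factorial)
    (P : ℕ → Polynomial ℝ) (h : ℕ → ℝ)
    (hmonic : ∀ n, (P n).Monic) (hdeg : ∀ n, (P n).natDegree = n)
    (hh : ∀ n, h n ≠ 0)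
    (horth : ∀ n m : ℕ,
      (∑' x : ℕ, (P n * P m).eval (x : ℝ) * w x) = if n = m then h n else 0)
    (β γ : ℕ → ℝ) (hγ0 : γ 0 = 0)
    (hrec : ∀ n : ℕ, X * P n = P (n + 1) + C (β n) * P n + C (γ n) * P (n - 1)) :
    ∀ n : ℕ,
      C z * (X + C a) * (P n).comp (X + 1) =
        C (γ n) * P (n - 1) + C ((1 - z) * (γ (n + 1) - γ n)) * P n
          + C z * P (n + 1) := by
  intro n
  obtain rfl : w = meixnerWeight a z := funext hw
  have hsum := summable_eval_mul_of_tendsto_ratio (meixnerWeight_pos ha hz0) hz1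
    (tendsto_meixnerWeight_succ_div ha hz0)
  have hP : IsMonicOrthogonal (discreteMomentFunctional _ hsum) P h :=
    ⟨fun n => ⟨hdeg n, hmonic n⟩, horth⟩
  have hpearson := discreteMomentFunctional_mul_comp_X_add_one hsum (σ := C z * (X + C a))
    fun x => by simp [succ_mul_meixnerWeight_succ]
  have hσdeg : (C z * (X + C a)).natDegree ≤ 1 :=
    (natDegree_C_mul_le _ _).trans (natDegree_X_add_C a).le
  simpa using hP.structure_relation hh hrec hγ0 hσdeg hpearson n
end

section
/- Let a1, a2 > 0, b > −1, 0 < z < 1, and let L be the generalized-Hahn moment functional L[f] = Σ_{x=0}^{∞} f(x)·(a1)_x (a2)_x z^x / ((b+1)_x x!). Let (P_n)_{n≥0} be a monic orthogonal polynomial sequence for L with recurrence coefficients β_n, γ_n. Then the initial data satisfy β_0 = μ_1/μ_0, where μ_0 = Σ_{x=0}^{∞} (a1)_x (a2)_x z^x/((b+1)_x x!) and μ_1 = Σ_{x=0}^{∞} x·(a1)_x (a2)_x z^x/((b+1)_x x!), and (1−z)·[γ_1 + (β_0 + a1)(β_0 + a2)] = (a1 + a2 − b)β_0 + a1 a2.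 -/
open Polynomial Filter Topology

/-!
Write `L` for the moment functional and `μ₀ = L[1] > 0`. Since `P₀ = 1`, orthogonality to `P₀`
says `L[P₁] = L[P₂] = 0`; with `P₁ = x - β₀` and `x P₁ = P₂ + β₁ P₁ + γ₁` this gives
`L[x] = β₀ μ₀` and `L[x²] = (β₀² + γ₁) μ₀`. The weight satisfies the Pearson equation
`(x + 1)(x + 1 + b) w(x + 1) = z (x + a₁)(x + a₂) w(x)`, and shifting the summation index turns it
into `L[x (x + b)] = z L[(x + a₁)(x + a₂)]`. Substituting the two moments and dividing by `μ₀`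
gives the second identity. Convergence of all moments is the ratio test: `w(x + 1) / w(x) → z`.
-/

lemma summable_natCast_pow_mul_of_ratio_test {f : ℕ → ℝ} {r : ℝ} (hr : r < 1)
    (hf : ∀ᶠ n in atTop, f n ≠ 0) (hlim : Tendsto (fun n ↦ ‖f (n + 1)‖ / ‖f n‖) atTop (𝓝 r))
    (k : ℕ) : Summable fun n : ℕ ↦ (n : ℝ) ^ k * f n := by
  refine summable_of_ratio_test_tendsto_lt_one hr ?_ ?_
  · filter_upwards [hf, eventually_ne_atTop 0] with n hfn hn
    exact mul_ne_zero (pow_ne_zero _ (Nat.cast_ne_zero.2 hn)) hfn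
  · have hpow : Tendsto (fun n : ℕ ↦ (((n : ℝ) + 1) / n) ^ k) atTop (𝓝 1) := by
      simpa [add_comm] using (tendsto_add_mul_div_add_mul_atTop_nhds (1 : ℝ) 0 1 one_ne_zero).pow k
    refine (one_mul r ▸ hpow.mul hlim).congr' ?_
    filter_upwards [hf, eventually_ne_atTop 0] with n hfn hn
    have : (n : ℝ) ≠ 0 := Nat.cast_ne_zero.2 hn
    have : ‖f n‖ ≠ 0 := norm_ne_zero_iff.2 hfn
    rw [norm_mul, norm_mul, norm_pow, norm_pow, Real.norm_natCast, Real.norm_natCast]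
    push_cast
    rw [div_pow]
    field_simp

section MomentFunctional

variable (w : ℕ → ℝ)

def HasMoments : Prop := ∀ k : ℕ, Summable fun x : ℕ ↦ (x : ℝ) ^ k * w x

variable {w}

lemma HasMoments.summable_eval_mul (hw : HasMoments w) (p : ℝ[X]) :
    Summable fun x : ℕ ↦ p.eval (x : ℝ) * w x := by
  induction p using Polynomial.induction_on' with
  | add p q hp hq => simpa only [eval_add, add_mul] using hp.add hq
  | monomial n a => simpa only [eval_monomial, mul_assoc] using (hw n).mul_left a

variable (w) in
noncomputable def momentFunctional (hw : HasMoments w) : ℝ[X] →ₗ[ℝ] ℝ where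
  toFun p := ∑' x : ℕ, p.eval (x : ℝ) * w x
  map_add' p q := by
    simp only [eval_add, add_mul]
    exact (hw.summable_eval_mul p).tsum_add (hw.summable_eval_mul q)
  map_smul' c p := by
    simp only [eval_smul, smul_eq_mul, mul_assoc, tsum_mul_left, RingHom.id_apply]

lemma momentFunctional_apply (hw : HasMoments w) (p : ℝ[X]) :
    momentFunctional w hw p = ∑' x : ℕ, p.eval (x : ℝ) * w x := rfl

@[simp]
lemma momentFunctional_one (hw : HasMoments w) : momentFunctional w hw 1 = ∑' x : ℕ, w x := by
  simp [momentFunctional_apply]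

@[simp]
lemma momentFunctional_X (hw : HasMoments w) :
    momentFunctional w hw X = ∑' x : ℕ, (x : ℝ) * w x := by
  simp [momentFunctional_apply]

lemma momentFunctional_eq_of_shift (hw : HasMoments w) {φ ψ : ℝ[X]} (hφ : φ.eval 0 = 0)
    (hshift : ∀ n : ℕ, φ.eval ((n : ℝ) + 1) * w (n + 1) = ψ.eval (n : ℝ) * w n) :
    momentFunctional w hw φ = momentFunctional w hw ψ := by
  simp only [momentFunctional_apply, (hw.summable_eval_mul φ).tsum_eq_zero_add, Nat.cast_zero,
    hφ, zero_mul, zero_add, Nat.cast_add, Nat.cast_one, hshift]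

lemma momentFunctional_pos (hw : HasMoments w) (hpos : ∀ x, 0 < w x) :
    0 < momentFunctional w hw 1 := by
  simpa using (hw 0).tsum_pos (fun x ↦ by simpa using (hpos x).le) 0 (by simpa using hpos 0)

end MomentFunctional

section ThreeTermRecurrence

variable {R : Type*} [CommRing R]

lemma LinearMap.map_C_mul (L : R[X] →ₗ[R] R) (c : R) (p : R[X]) : L (C c * p) = c * L p := by
  rw [C_mul', map_smul, smul_eq_mul]

lemma LinearMap.map_C (L : R[X] →ₗ[R] R) (c : R) : L (C c) = c * L 1 := by
  rw [← L.map_C_mul, mul_one]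

variable {P : ℕ → R[X]} {β γ : ℕ → R}

-- `P (0 - 1)` is `P 0` under truncated subtraction, so `γ 0 = 0` is what removes it.
lemma eq_X_sub_C_of_threeTermRecurrence
    (hrec : ∀ n : ℕ, X * P n = P (n + 1) + C (β n) * P n + C (γ n) * P (n - 1))
    (hP0 : P 0 = 1) (hγ0 : γ 0 = 0) : P 1 = X - C (β 0) := by
  have h := hrec 0
  simp only [hγ0, hP0, map_zero, add_zero, mul_one] at h
  linear_combination -h

variable (L : R[X] →ₗ[R] R)

lemma map_X_of_threeTermRecurrence
    (hrec : ∀ n : ℕ, X * P n = P (n + 1) + C (β n) * P n + C (γ n) * P (n - 1))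
    (hP0 : P 0 = 1) (hγ0 : γ 0 = 0) (hL1 : L (P 1) = 0) : L X = β 0 * L 1 := by
  rwa [eq_X_sub_C_of_threeTermRecurrence hrec hP0 hγ0, map_sub, L.map_C, sub_eq_zero] at hL1

lemma map_X_sq_of_threeTermRecurrence
    (hrec : ∀ n : ℕ, X * P n = P (n + 1) + C (β n) * P n + C (γ n) * P (n - 1))
    (hP0 : P 0 = 1) (hγ0 : γ 0 = 0) (hL1 : L (P 1) = 0) (hL2 : L (P 2) = 0) :
    L (X ^ 2) = (β 0 ^ 2 + γ 1) * L 1 := by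
  have hXP1 : L (X * P 1) = γ 1 * L 1 := by
    rw [hrec 1, map_add, map_add, L.map_C_mul, L.map_C_mul, hL1, hL2, Nat.sub_self, hP0]
    ring
  rw [eq_X_sub_C_of_threeTermRecurrence hrec hP0 hγ0, mul_sub, ← pow_two, map_sub, mul_comm,
    L.map_C_mul, map_X_of_threeTermRecurrence L hrec hP0 hγ0 hL1] at hXP1
  linear_combination hXP1

end ThreeTermRecurrence

noncomputable def hahnWeight (a1 a2 b z : ℝ) (x : ℕ) : ℝ :=
  (ascPochhammer ℝ x).eval a1 * (ascPochhammer ℝ x).eval a2 * z ^ x /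
    ((ascPochhammer ℝ x).eval (b + 1) * x.factorial)

section GeneralizedHahn

variable {a1 a2 b z : ℝ}

lemma hahnWeight_pos (ha1 : 0 < a1) (ha2 : 0 < a2) (hb : -1 < b) (hz : 0 < z) (x : ℕ) :
    0 < hahnWeight a1 a2 b z x := by
  have := ascPochhammer_pos x a1 ha1
  have := ascPochhammer_pos x a2 ha2
  have := ascPochhammer_pos x (b + 1) (by linarith)
  unfold hahnWeight
  positivity

lemma hahnWeight_succ (hb : -1 < b) (n : ℕ) :
    hahnWeight a1 a2 b z (n + 1) * ((n + 1) * (n + 1 + b)) =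
      z * (n + a1) * (n + a2) * hahnWeight a1 a2 b z n := by
  have := (ascPochhammer_pos n (b + 1) (by linarith)).ne'
  have : b + 1 + n ≠ 0 := by have := n.cast_nonneg (α := ℝ); linarith
  unfold hahnWeight
  rw [ascPochhammer_succ_eval, ascPochhammer_succ_eval, ascPochhammer_succ_eval,
    Nat.factorial_succ]
  push_cast
  field_simp
  ring

lemma tendsto_hahnWeight_ratio (ha1 : 0 < a1) (ha2 : 0 < a2) (hb : -1 < b) (hz : 0 < z) :
    Tendsto (fun n ↦ ‖hahnWeight a1 a2 b z (n + 1)‖ / ‖hahnWeight a1 a2 b z n‖) atTop (𝓝 z) := by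
  have hlim := ((tendsto_add_mul_div_add_mul_atTop_nhds a1 1 1 one_ne_zero).mul
    (tendsto_add_mul_div_add_mul_atTop_nhds a2 (1 + b) 1 one_ne_zero)).const_mul z
  simp only [div_one, mul_one, one_mul] at hlim
  refine hlim.congr fun n ↦ ?_
  have hw := (hahnWeight_pos ha1 ha2 hb hz n).ne'
  have : 1 + b + n ≠ 0 := by have := n.cast_nonneg (α := ℝ); linarith
  rw [Real.norm_of_nonneg (hahnWeight_pos ha1 ha2 hb hz _).le,
    Real.norm_of_nonneg (hahnWeight_pos ha1 ha2 hb hz _).le, eq_div_iff hw]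
  have := hahnWeight_succ (a1 := a1) (a2 := a2) (z := z) hb n
  field_simp
  linear_combination -this

lemma hahnWeight_hasMoments (ha1 : 0 < a1) (ha2 : 0 < a2) (hb : -1 < b) (hz0 : 0 < z)
    (hz1 : z < 1) : HasMoments (hahnWeight a1 a2 b z) :=
  summable_natCast_pow_mul_of_ratio_test hz1
    (Eventually.of_forall fun n ↦ (hahnWeight_pos ha1 ha2 hb hz0 n).ne')
    (tendsto_hahnWeight_ratio ha1 ha2 hb hz0)

-- The Pearson equation `hahnWeight_succ`, summed over `ℕ`.
lemma hahnWeight_pearson (hb : -1 < b) (hw : HasMoments (hahnWeight a1 a2 b z)) :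
    momentFunctional _ hw (X ^ 2) + b * momentFunctional _ hw X =
      z * (momentFunctional _ hw (X ^ 2) + (a1 + a2) * momentFunctional _ hw X +
        a1 * a2 * momentFunctional _ hw 1) := by
  have h := momentFunctional_eq_of_shift hw (φ := X ^ 2 + C b * X)
    (ψ := C z * (X ^ 2 + C (a1 + a2) * X + C (a1 * a2))) (by simp) fun n ↦ by
      simp only [eval_add, eval_mul, eval_pow, eval_X, eval_C]
      linear_combination hahnWeight_succ (a1 := a1) (a2 := a2) (z := z) hb n
  simpa only [LinearMap.map_add, LinearMap.map_C_mul, LinearMap.map_C] using h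

end GeneralizedHahn

theorem generalized_hahn_initial_conditions_general
    (a1 a2 b z : ℝ) (ha1 : 0 < a1) (ha2 : 0 < a2) (hb : -1 < b)
    (hz0 : 0 < z) (hz1 : z < 1)
    (w : ℕ → ℝ)
    (hw : ∀ x : ℕ, w x =
      (ascPochhammer ℝ x).eval a1 * (ascPochhammer ℝ x).eval a2 * z ^ x /
        ((ascPochhammer ℝ x).eval (b + 1) * x.factorial))
    (P : ℕ → Polynomial ℝ) (h : ℕ → ℝ)
    (hmonic : ∀ n, (P n).Monic) (hdeg : ∀ n, (P n).natDegree = n)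
    (horth : ∀ n m : ℕ,
      (∑' x : ℕ, (P n * P m).eval (x : ℝ) * w x) = if n = m then h n else 0)
    (β γ : ℕ → ℝ) (hγ0 : γ 0 = 0)
    (hrec : ∀ n : ℕ, X * P n = P (n + 1) + C (β n) * P n + C (γ n) * P (n - 1)) :
    β 0 = (∑' x : ℕ, (x : ℝ) * w x) / (∑' x : ℕ, w x) ∧
    (1 - z) * (γ 1 + (β 0 + a1) * (β 0 + a2)) = (a1 + a2 - b) * β 0 + a1 * a2 := by
  obtain rfl : w = hahnWeight a1 a2 b z := funext hw
  have hmom := hahnWeight_hasMoments ha1 ha2 hb hz0 hz1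
  have hpearson := hahnWeight_pearson hb hmom
  set L := momentFunctional _ hmom
  have hP0 : P 0 = 1 := eq_one_of_monic_natDegree_zero (hmonic 0) (hdeg 0)
  have hLP : ∀ n, n ≠ 0 → L (P n) = 0 := fun n hn ↦ by
    simpa [L, momentFunctional_apply, hP0, hn] using horth n 0
  have hμ0 : 0 < L 1 := momentFunctional_pos hmom (hahnWeight_pos ha1 ha2 hb hz0)
  have hX := map_X_of_threeTermRecurrence L hrec hP0 hγ0 (hLP 1 one_ne_zero)
  have hX2 := map_X_sq_of_threeTermRecurrence L hrec hP0 hγ0 (hLP 1 one_ne_zero)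
    (hLP 2 two_ne_zero)
  rw [hX, hX2] at hpearson
  constructor
  · rw [← momentFunctional_X hmom, ← momentFunctional_one hmom, hX,
      mul_div_cancel_right₀ _ hμ0.ne']
  · apply mul_right_cancel₀ hμ0.ne'
    linear_combination hpearson

/-- initial conditions for the Laguerre–Freud equations of the
generalized Hahn polynomials of type I: β₀ = μ₁/μ₀ and
(1−z)[γ₁ + (β₀+a₁)(β₀+a₂)] = (a₁+a₂−b)β₀ + a₁a₂. -/
theorem generalized_hahn_initial_conditions
    (a1 a2 b z : ℝ) (ha1 : 0 < a1) (ha2 : 0 < a2) (hb : -1 < b)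
    (hz0 : 0 < z) (hz1 : z < 1)
    (w : ℕ → ℝ)
    (hw : ∀ x : ℕ, w x =
      (ascPochhammer ℝ x).eval a1 * (ascPochhammer ℝ x).eval a2 * z ^ x /
        ((ascPochhammer ℝ x).eval (b + 1) * x.factorial))
    (P : ℕ → Polynomial ℝ) (h : ℕ → ℝ)
    (hmonic : ∀ n, (P n).Monic) (hdeg : ∀ n, (P n).natDegree = n)
    (hh : ∀ n, h n ≠ 0)
    (horth : ∀ n m : ℕ,
      (∑' x : ℕ, (P n * P m).eval (x : ℝ) * w x) = if n = m then h n else 0)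
    (β γ : ℕ → ℝ) (hγ0 : γ 0 = 0)
    (hrec : ∀ n : ℕ, X * P n = P (n + 1) + C (β n) * P n + C (γ n) * P (n - 1)) :
    β 0 = (∑' x : ℕ, (x : ℝ) * w x) / (∑' x : ℕ, w x) ∧
    (1 - z) * (γ 1 + (β 0 + a1) * (β 0 + a2)) = (a1 + a2 - b) * β 0 + a1 * a2 :=
  generalized_hahn_initial_conditions_general a1 a2 b z ha1 ha2 hb hz0 hz1 w hw P h hmonic hdeg
    horth β γ hγ0 hrec
end

section
/- Let a1, a2 > 0, b > −1, 0 < z < 1, and let L be the generalized-Hahn moment functional L[f] = Σ_{x=0}^{∞} f(x)·(a1)_x (a2)_x z^x / ((b+1)_x x!). Let (P_n)_{n≥0} be a monic orthogonal polynomial sequence for L with recurrence coefficients β_n, γ_n, and let A_k(n), −2 ≤ k ≤ 2, be the unique coefficients in the expansion z(x+a1)(x+a2)·P_n(x+1) = Σ_{k=−2}^{2} A_k(n) P_{n+k}(x). Then for all n ≥ 0: A_1(n) = z(β_{n+1} + β_n + n + a1 + a2). -/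
open Polynomial

private lemma comp_X_add_one_eq (p : Polynomial ℝ) :
    p.comp (X + 1) =
      ∑ j ∈ Finset.range (p.natDegree + 1), C (p.coeff j) * (X + 1) ^ j := by
  rw [comp_eq_sum_left]
  refine Polynomial.sum_over_range p fun n => ?_
  simp

private lemma coeff_comp_X_add_one (p : Polynomial ℝ) (k : ℕ) :
    (p.comp (X + 1)).coeff k =
      ∑ j ∈ Finset.range (p.natDegree + 1), p.coeff j * ((j.choose k : ℕ) : ℝ) := by
  rw [comp_X_add_one_eq, finset_sum_coeff]
  refine Finset.sum_congr rfl fun j _ => ?_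
  rw [coeff_C_mul, Polynomial.coeff_X_add_one_pow]

/-- for the generalized Hahn polynomials of type I,
A₁(n) = z(β_{n+1} + βₙ + n + a₁ + a₂). -/
theorem generalized_hahn_A_one
    (a1 a2 b z : ℝ) (ha1 : 0 < a1) (ha2 : 0 < a2) (hb : -1 < b)
    (hz0 : 0 < z) (hz1 : z < 1)
    (w : ℕ → ℝ)
    (hw : ∀ x : ℕ, w x =
      (ascPochhammer ℝ x).eval a1 * (ascPochhammer ℝ x).eval a2 * z ^ x /
        ((ascPochhammer ℝ x).eval (b + 1) * x.factorial))
    (P : ℕ → Polynomial ℝ) (h : ℕ → ℝ)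
    (hmonic : ∀ n, (P n).Monic) (hdeg : ∀ n, (P n).natDegree = n)
    (hh : ∀ n, h n ≠ 0)
    (horth : ∀ n m : ℕ,
      (∑' x : ℕ, (P n * P m).eval (x : ℝ) * w x) = if n = m then h n else 0)
    (β γ : ℕ → ℝ) (hγ0 : γ 0 = 0)
    (hrec : ∀ n : ℕ, X * P n = P (n + 1) + C (β n) * P n + C (γ n) * P (n - 1))
    (A : ℕ → ℤ → ℝ)
    (hA : ∀ n : ℕ,
      C z * (X + C a1) * (X + C a2) * (P n).comp (X + 1) =
        ∑ k ∈ Finset.Icc (max (-(n : ℤ)) (-2)) 2,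
          A n k • P ((n : ℤ) + k).toNat) :
    ∀ n : ℕ, A n 1 = z * (β (n + 1) + β n + (n : ℝ) + a1 + a2) := by
  -- subleading coefficients
  set u : ℕ → ℝ := fun n => if n = 0 then 0 else (P n).coeff (n - 1) with hu
  have hu0 : u 0 = 0 := by simp [hu]
  have hu1 : ∀ m : ℕ, u (m + 1) = (P (m + 1)).coeff m := fun m => by simp [hu]
  have hP0 : P 0 = 1 := ((hmonic 0).natDegree_eq_zero).mp (hdeg 0)
  have hlead : ∀ n, (P n).coeff n = 1 := fun n => by
    have := (hmonic n).coeff_natDegree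
    rwa [hdeg] at this
  have hzero : ∀ m c : ℕ, m < c → (P m).coeff c = 0 := fun m c hc =>
    coeff_eq_zero_of_natDegree_lt (by rw [hdeg]; exact hc)
  -- β in terms of u
  have hβ : ∀ n, β n = u n - u (n + 1) := by
    intro n
    match n with
    | 0 =>
      have h0 := congrArg (fun q => q.coeff 0) (hrec 0)
      simp only [mul_coeff_zero, coeff_X_zero, zero_mul, coeff_add, coeff_C_mul,
        hγ0, map_zero, hP0, coeff_one] at h0
      norm_num at h0
      rw [hu0, hu1 0]
      linarith
    | m + 1 =>
      have h0 := congrArg (fun q => q.coeff (m + 1)) (hrec (m + 1))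
      simp only [coeff_add, coeff_C_mul, coeff_X_mul] at h0
      rw [hlead (m + 1), Nat.add_sub_cancel, hzero m (m + 1) (Nat.lt_succ_self m)] at h0
      rw [hu1 (m + 1)]
      have hum : u (m + 1) = (P (m + 1)).coeff m := hu1 m
      rw [hum]
      have : (P (m + 1)).coeff m = (P (m + 1 + 1)).coeff (m + 1) + β (m + 1) := by
        simpa using h0
      linarith
  intro n
  set Q : Polynomial ℝ := (P n).comp (X + 1) with hQ
  have hQmonic : Q.Monic := by
    have := (hmonic n).comp_X_add_C 1
    rwa [map_one] at this
  have hQdeg : Q.natDegree = n := by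
    rw [hQ, natDegree_comp, hdeg]
    have h1 : (X + 1 : Polynomial ℝ).natDegree = 1 := by
      rw [← map_one (C : ℝ →+* Polynomial ℝ)]; exact natDegree_X_add_C 1
    rw [h1, mul_one]
  have hQlead : Q.coeff n = 1 := by
    have := hQmonic.coeff_natDegree; rwa [hQdeg] at this
  have hQzero : ∀ c, n < c → Q.coeff c = 0 := fun c hc =>
    coeff_eq_zero_of_natDegree_lt (by rw [hQdeg]; exact hc)
  -- subleading coefficient of Q
  have hQsub : ∀ m, n = m + 1 → Q.coeff m = u n + n := by
    intro m hm
    have hd : (P n).natDegree = m + 1 := by rw [hdeg, hm]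
    rw [hQ, coeff_comp_X_add_one, hd, Finset.sum_range_succ, Finset.sum_range_succ]
    have hz' : ∑ j ∈ Finset.range m, (P n).coeff j * ((j.choose m : ℕ) : ℝ) = 0 :=
      Finset.sum_eq_zero fun j hj => by
        rw [Nat.choose_eq_zero_of_lt (Finset.mem_range.mp hj)]; simp
    rw [hz', Nat.choose_self, Nat.choose_succ_self_right]
    have hc1 : (P n).coeff (m + 1) = 1 := by rw [hm]; exact hlead (m + 1)
    have hcu : (P n).coeff m = u n := by rw [hm]; exact (hu1 m).symm
    rw [hc1, hcu, hm]
    push_cast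
    ring
  -- expansion of the left-hand side
  have hexp : C z * (X + C a1) * (X + C a2) * Q =
      Q * X ^ 2 * C z + Q * X * C (z * a1 + z * a2) + Q * C (z * a1 * a2) := by
    simp only [map_add, map_mul]; ring
  have hR : ∀ c : ℕ,
      (∑ k ∈ Finset.Icc (max (-(n : ℤ)) (-2)) 2, A n k • P ((n : ℤ) + k).toNat).coeff c =
      ∑ k ∈ Finset.Icc (max (-(n : ℤ)) (-2)) 2, A n k * (P ((n : ℤ) + k).toNat).coeff c := by
    intro c
    rw [finset_sum_coeff]
    exact Finset.sum_congr rfl fun k _ => by rw [coeff_smul, smul_eq_mul]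
  -- coefficient extraction at n+2 : A n 2 = z
  have hL2 : (C z * (X + C a1) * (X + C a2) * Q).coeff (n + 2) = z := by
    rw [hexp, coeff_add, coeff_add, coeff_mul_C, coeff_mul_C, coeff_mul_C]
    rw [coeff_mul_X_pow Q 2 n]
    rw [show n + 2 = (n + 1) + 1 from rfl, coeff_mul_X]
    rw [hQlead, hQzero (n + 1) (by omega), hQzero (n + 1 + 1) (by omega)]
    ring
  have hR2 : (∑ k ∈ Finset.Icc (max (-(n : ℤ)) (-2)) 2, A n k • P ((n : ℤ) + k).toNat).coeff
      (n + 2) = A n 2 := by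
    rw [hR]
    rw [Finset.sum_eq_single 2]
    · rw [show ((n : ℤ) + 2).toNat = n + 2 by omega, hlead, mul_one]
    · intro k hk hk2
      rw [Finset.mem_Icc] at hk
      rw [hzero ((n : ℤ) + k).toNat (n + 2) (by omega), mul_zero]
    · intro hk
      exact absurd (Finset.mem_Icc.mpr ⟨by omega, by omega⟩) hk
  have hA2 : A n 2 = z := by
    have hc := congrArg (fun q => q.coeff (n + 2)) (hA n)
    rw [hL2, hR2] at hc
    exact hc.symm
  -- coefficient extraction at n+1
  have hL1 : (C z * (X + C a1) * (X + C a2) * Q).coeff (n + 1) =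
      z * (u n + n + a1 + a2) := by
    rw [hexp, coeff_add, coeff_add, coeff_mul_C, coeff_mul_C, coeff_mul_C]
    rw [coeff_mul_X, coeff_mul_X_pow']
    rw [hQlead, hQzero (n + 1) (by omega)]
    rcases Nat.eq_zero_or_pos n with hn0 | hnpos
    · subst hn0
      rw [if_neg (by omega)]
      rw [hu0]
      push_cast
      ring
    · obtain ⟨m, hm⟩ : ∃ m, n = m + 1 := ⟨n - 1, by omega⟩
      rw [if_pos (by omega), show n + 1 - 2 = m by omega, hQsub m hm]
      ring
  have hR1 : (∑ k ∈ Finset.Icc (max (-(n : ℤ)) (-2)) 2, A n k • P ((n : ℤ) + k).toNat).coeff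
      (n + 1) = A n 1 + A n 2 * u (n + 2) := by
    rw [hR]
    have hsub : ({1, 2} : Finset ℤ) ⊆ Finset.Icc (max (-(n : ℤ)) (-2)) 2 := by
      intro x hx
      simp only [Finset.mem_insert, Finset.mem_singleton] at hx
      rcases hx with h1 | h2 <;> (rw [Finset.mem_Icc]; constructor <;> omega)
    rw [← Finset.sum_subset hsub (fun x hx hx' => by
      simp only [Finset.mem_insert, Finset.mem_singleton, not_or] at hx'
      rw [Finset.mem_Icc] at hx
      rw [hzero ((n : ℤ) + x).toNat (n + 1) (by omega), mul_zero])]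
    rw [Finset.sum_pair (by decide : (1 : ℤ) ≠ 2)]
    rw [show ((n : ℤ) + 1).toNat = n + 1 by omega, show ((n : ℤ) + 2).toNat = n + 2 by omega]
    rw [hlead (n + 1), mul_one]
    rw [hu1 (n + 1)]
  have hmain : z * (u n + n + a1 + a2) = A n 1 + A n 2 * u (n + 2) := by
    have hc := congrArg (fun q => q.coeff (n + 1)) (hA n)
    rw [hL1, hR1] at hc
    exact hc
  rw [hβ n, hβ (n + 1)]
  rw [hA2] at hmain
  linear_combination (-1 : ℝ) * hmain
end
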